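/- arXiv:2411.14334 — 2 statements merged into one kernel-verified Lean document; each statement's English description precedes it below -/
import Mathlib

section
/- Let X be a nonnegative real-valued random variable such that its moment generating function g(s) = E[s^X] (for s in (0,1]) admits an expansion g(s) = ∑_{k=0}^n p_k s^k + O(s^{n+1}) as s ↓ 0 for every n, i.e., g is analytic at 0 with nonnegative coefficients summing appropriately. Then X takes values in the nonnegative integers almost surely. -/
/-!
Let `μ` be the law of `X`. We work with `t = s` in `ℝ≥0∞`, where `t ↦ t ^ c` is continuous at `0`
for every real exponent `c` (with `0 ^ c = ∞` for `c < 0`).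

Suppose `∫_{[a,∞)} t ^ (x - a) dμ = ∑ q_k t ^ k` for small `t > 0`. Letting `t → 0` gives
`μ {a} = q_0`. Subtracting and dividing by `t` gives
`∫_{(a,∞)} t ^ (x - a - 1) dμ = ∑ q_{k+1} t ^ k`, which stays bounded as `t → 0`, whereas
`t ^ (x - a - 1) → ∞` on `(a, a + 1)`; by Fatou's lemma `μ (a, a + 1) = 0`. Hence the same identity
holds on `[a + 1, ∞)` with the shifted coefficients, and induction from `a = 0` shows that `μ`
charges no interval `(n, n + 1)`.
-/

open MeasureTheory Filter Set Topology ENNReal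

section PowerSeries

variable (q : ℕ → ℝ≥0∞)

theorem tsum_mul_pow_eq_add_mul (t : ℝ≥0∞) :
    ∑' k, q k * t ^ k = q 0 + t * ∑' k, q (k + 1) * t ^ k := by
  rw [tsum_eq_zero_add' ENNReal.summable, ← ENNReal.tsum_mul_left]
  simp only [pow_zero, mul_one, pow_succ]
  congr 1
  exact tsum_congr fun k => by ring

theorem monotone_tsum_mul_pow : Monotone fun t : ℝ≥0∞ => ∑' k, q k * t ^ k :=
  fun _ _ hst => ENNReal.tsum_le_tsum fun _ => by gcongr

variable {q}

theorem exists_tsum_succ_mul_pow_le {t₀ : ℝ≥0∞} (ht₀ : t₀ ≠ 0)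
    (hfin : ∑' k, q k * t₀ ^ k ≠ ∞) :
    ∃ C ≠ ∞, ∀ᶠ t in 𝓝 0, ∑' k, q (k + 1) * t ^ k ≤ C := by
  refine ⟨∑' k, q (k + 1) * t₀ ^ k, fun htop => hfin ?_, ?_⟩
  · rw [tsum_mul_pow_eq_add_mul, htop, ENNReal.mul_top ht₀, add_top]
  · filter_upwards [Iio_mem_nhds (pos_iff_ne_zero.2 ht₀)] with t ht
    exact monotone_tsum_mul_pow _ ht.le

theorem tendsto_tsum_mul_pow {t₀ : ℝ≥0∞} (ht₀ : t₀ ≠ 0) (hfin : ∑' k, q k * t₀ ^ k ≠ ∞) :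
    Tendsto (fun t => ∑' k, q k * t ^ k) (𝓝 0) (𝓝 (q 0)) := by
  obtain ⟨C, hC, hle⟩ := exists_tsum_succ_mul_pow_le ht₀ hfin
  have hlim : Tendsto (fun t => q 0 + t * C) (𝓝 0) (𝓝 (q 0)) := by
    simpa using (ENNReal.Tendsto.mul_const (tendsto_id (x := 𝓝 0)) (Or.inr hC)).const_add (q 0)
  refine tendsto_of_tendsto_of_tendsto_of_le_of_le' tendsto_const_nhds hlim
    (.of_forall fun t => ?_) ?_
  · rw [tsum_mul_pow_eq_add_mul]
    exact le_self_add
  · filter_upwards [hle] with t ht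
    rw [tsum_mul_pow_eq_add_mul]
    gcongr

end PowerSeries

theorem measure_eq_zero_of_tendsto_top_of_lintegral_le {α ι : Type*} [MeasurableSpace α]
    {μ : Measure α} {l : Filter ι} [l.IsCountablyGenerated] [l.NeBot] {f : ι → α → ℝ≥0∞}
    (hf : ∀ i, Measurable (f i)) {s : Set α} (hs : MeasurableSet s)
    (hs_top : ∀ x ∈ s, Tendsto (fun i => f i x) l (𝓝 ∞)) {C : ℝ≥0∞} (hC : C ≠ ∞)
    (hbdd : ∀ᶠ i in l, ∫⁻ x, f i x ∂μ ≤ C) : μ s = 0 := by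
  by_contra hs0
  refine hC (top_le_iff.1 ?_)
  calc ∞ = ∫⁻ _ in s, ∞ ∂μ := by rw [setLIntegral_const, ENNReal.top_mul hs0]
    _ = ∫⁻ x in s, liminf (fun i => f i x) l ∂μ :=
        setLIntegral_congr_fun hs fun x hx => (hs_top x hx).liminf_eq.symm
    _ ≤ ∫⁻ x, liminf (fun i => f i x) l ∂μ := setLIntegral_le_lintegral _ _
    _ ≤ liminf (fun i => ∫⁻ x, f i x ∂μ) l := lintegral_liminf_le hf
    _ ≤ C := liminf_le_of_frequently_le' hbdd.frequently

theorem setLIntegral_Ici_eq_add {μ : Measure ℝ} (f : ℝ → ℝ≥0∞) (a : ℝ) :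
    ∫⁻ x in Ici a, f x ∂μ = f a * μ {a} + ∫⁻ x in Ioi a, f x ∂μ := by
  rw [← Ioi_insert, insert_eq, lintegral_union measurableSet_Ioi (by simp), lintegral_singleton]

theorem setLIntegral_Ici_rpow_sub_eq {μ : Measure ℝ} {a : ℝ} {t : ℝ≥0∞}
    (ht₀ : t ≠ 0) (ht : t ≠ ∞) :
    ∫⁻ x in Ici a, t ^ (x - a) ∂μ = μ {a} + t * ∫⁻ x in Ioi a, t ^ (x - (a + 1)) ∂μ := by
  rw [setLIntegral_Ici_eq_add, sub_self, rpow_zero, one_mul, ← lintegral_const_mul' _ _ ht]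
  congr 1
  refine lintegral_congr fun x => ?_
  rw [show x - a = 1 + (x - (a + 1)) by ring, rpow_add _ _ ht₀ ht, rpow_one]

theorem tendsto_setLIntegral_Ici_rpow_sub (μ : Measure ℝ) [IsFiniteMeasure μ] (a : ℝ) :
    Tendsto (fun t : ℝ≥0∞ => ∫⁻ x in Ici a, t ^ (x - a) ∂μ) (𝓝[>] 0) (𝓝 (μ {a})) := by
  have hlim : ∫⁻ x in Ici a, (0 : ℝ≥0∞) ^ (x - a) ∂μ = μ {a} := by
    rw [setLIntegral_Ici_eq_add, sub_self, rpow_zero, one_mul,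
      setLIntegral_congr_fun measurableSet_Ioi fun x (hx : a < x) =>
        zero_rpow_of_pos (sub_pos.2 hx), lintegral_zero, add_zero]
  rw [← hlim]
  refine tendsto_lintegral_filter_of_dominated_convergence 1 (.of_forall fun t => by fun_prop)
    ?_ (by simp) (.of_forall fun x => ?_)
  · filter_upwards [nhdsWithin_le_nhds (Iio_mem_nhds zero_lt_one)] with t ht
    exact ae_restrict_of_forall_mem measurableSet_Ici fun x (hx : a ≤ x) =>
      rpow_le_one ht.le (sub_nonneg.2 hx)
  · exact (continuous_rpow_const.tendsto 0).mono_left nhdsWithin_le_nhds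

section Peeling

variable {μ : Measure ℝ} [IsFiniteMeasure μ] {a : ℝ} {q : ℕ → ℝ≥0∞}

theorem exists_tsum_mul_pow_ne_top
    (h : ∀ᶠ t in 𝓝[>] 0, ∫⁻ x in Ici a, t ^ (x - a) ∂μ = ∑' k, q k * t ^ k) :
    ∃ t₀ ≠ 0, ∑' k, q k * t₀ ^ k ≠ ∞ := by
  obtain ⟨t₀, heq, ht₀, ht₀_lt⟩ := (h.and (eventually_mem_nhdsWithin.and
    (nhdsWithin_le_nhds (Iio_mem_nhds zero_lt_one)))).exists
  refine ⟨t₀, pos_iff_ne_zero.1 ht₀, heq ▸ ne_top_of_le_ne_top (measure_ne_top μ (Ici a)) ?_⟩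
  calc ∫⁻ x in Ici a, t₀ ^ (x - a) ∂μ ≤ ∫⁻ _ in Ici a, 1 ∂μ :=
        setLIntegral_mono measurable_const fun x (hx : a ≤ x) =>
          rpow_le_one (le_of_lt ht₀_lt) (sub_nonneg.2 hx)
    _ = μ (Ici a) := by simp

theorem measure_singleton_eq_of_eventually_eq
    (h : ∀ᶠ t in 𝓝[>] 0, ∫⁻ x in Ici a, t ^ (x - a) ∂μ = ∑' k, q k * t ^ k) : μ {a} = q 0 := by
  obtain ⟨t₀, ht₀, hfin⟩ := exists_tsum_mul_pow_ne_top h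
  exact tendsto_nhds_unique ((tendsto_setLIntegral_Ici_rpow_sub μ a).congr' h)
    ((tendsto_tsum_mul_pow ht₀ hfin).mono_left nhdsWithin_le_nhds)

theorem eventually_setLIntegral_Ioi_rpow_sub_eq
    (h : ∀ᶠ t in 𝓝[>] 0, ∫⁻ x in Ici a, t ^ (x - a) ∂μ = ∑' k, q k * t ^ k) :
    ∀ᶠ t in 𝓝[>] 0, ∫⁻ x in Ioi a, t ^ (x - (a + 1)) ∂μ = ∑' k, q (k + 1) * t ^ k := by
  filter_upwards [h, eventually_mem_nhdsWithin,
    nhdsWithin_le_nhds (Iio_mem_nhds zero_lt_one)] with t heq (ht₀ : 0 < t) ht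
  rw [setLIntegral_Ici_rpow_sub_eq ht₀.ne' (ht.trans one_lt_top).ne, tsum_mul_pow_eq_add_mul,
    measure_singleton_eq_of_eventually_eq h] at heq
  exact (ENNReal.mul_right_inj ht₀.ne' (ht.trans one_lt_top).ne).1
    ((ENNReal.add_right_inj (measure_singleton_eq_of_eventually_eq h ▸ measure_ne_top μ _)).1 heq)

theorem measure_Ioo_eq_zero_of_eventually_eq
    (h : ∀ᶠ t in 𝓝[>] 0, ∫⁻ x in Ici a, t ^ (x - a) ∂μ = ∑' k, q k * t ^ k) :
    μ (Ioo a (a + 1)) = 0 := by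
  obtain ⟨t₀, ht₀, hfin⟩ := exists_tsum_mul_pow_ne_top h
  obtain ⟨C, hC, hle⟩ := exists_tsum_succ_mul_pow_le ht₀ hfin
  rw [← Measure.restrict_eq_self μ Ioo_subset_Ioi_self]
  refine measure_eq_zero_of_tendsto_top_of_lintegral_le (l := 𝓝[>] (0 : ℝ≥0∞))
    (f := fun t x => t ^ (x - (a + 1))) (fun t => by fun_prop) measurableSet_Ioo
    (fun x hx => ?_) hC ?_
  · have hneg : x - (a + 1) < 0 := by linarith [hx.2]
    simpa [zero_rpow_of_neg hneg] using
      ((continuous_rpow_const (y := x - (a + 1))).tendsto 0).mono_left nhdsWithin_le_nhds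
  · filter_upwards [eventually_setLIntegral_Ioi_rpow_sub_eq h, nhdsWithin_le_nhds hle]
      with t heq ht
    exact heq ▸ ht

theorem eventually_setLIntegral_Ici_add_one_rpow_sub_eq
    (h : ∀ᶠ t in 𝓝[>] 0, ∫⁻ x in Ici a, t ^ (x - a) ∂μ = ∑' k, q k * t ^ k) :
    ∀ᶠ t in 𝓝[>] 0, ∫⁻ x in Ici (a + 1), t ^ (x - (a + 1)) ∂μ = ∑' k, q (k + 1) * t ^ k := by
  have hae : Ici (a + 1) =ᵐ[μ] Ioi a := by
    rw [← Ioo_union_Ici_eq_Ioi (lt_add_one a)]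
    exact (union_ae_eq_right_of_ae_eq_empty
      (ae_eq_empty.2 (measure_Ioo_eq_zero_of_eventually_eq h))).symm
  simpa only [setLIntegral_congr hae] using eventually_setLIntegral_Ioi_rpow_sub_eq h

end Peeling

theorem exists_nat_eq_of_forall_notMem_Ioo {x : ℝ} (hx : 0 ≤ x)
    (h : ∀ n : ℕ, x ∉ Ioo (n : ℝ) (n + 1)) : ∃ n : ℕ, x = n :=
  ⟨⌊x⌋₊, ((Nat.floor_le hx).lt_or_eq.resolve_left
    fun hlt => h _ ⟨hlt, Nat.lt_floor_add_one x⟩).symm⟩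

theorem ae_exists_nat_eq_of_lintegral_rpow_eq_tsum (μ : Measure ℝ) [IsFiniteMeasure μ]
    (h₀ : ∀ᵐ x ∂μ, 0 ≤ x) (q : ℕ → ℝ≥0∞)
    (h : ∀ᶠ t in 𝓝[>] 0, ∫⁻ x, t ^ x ∂μ = ∑' k, q k * t ^ k) :
    ∀ᵐ x ∂μ, ∃ n : ℕ, x = (n : ℝ) := by
  have key : ∀ n : ℕ, ∀ᶠ t in 𝓝[>] 0,
      ∫⁻ x in Ici (n : ℝ), t ^ (x - n) ∂μ = ∑' k, q (n + k) * t ^ k := by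
    intro n
    induction n with
    | zero => simpa [Measure.restrict_eq_self_of_ae_mem (s := Ici 0) h₀] using h
    | succ n ih =>
      simpa [← add_assoc, add_right_comm _ 1] using
        eventually_setLIntegral_Ici_add_one_rpow_sub_eq ih
  have hnull : μ (⋃ n : ℕ, Ioo (n : ℝ) (n + 1)) = 0 :=
    measure_iUnion_null fun n => measure_Ioo_eq_zero_of_eventually_eq (key n)
  filter_upwards [h₀, measure_eq_zero_iff_ae_notMem.1 hnull] with x hx hxn
  exact exists_nat_eq_of_forall_notMem_Ioo hx (by simpa using hxn)

/-- A nonnegative random variable whose moment generating function `g(s) = E[s^X]`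
is, near `0`, given by a power series with nonnegative coefficients takes values
in the nonnegative integers almost surely. -/
theorem stmt_0
    {Ω : Type*} [MeasurableSpace Ω] (P : Measure Ω) [IsProbabilityMeasure P]
    (X : Ω → ℝ) (hXmeas : Measurable X) (hXnonneg : ∀ ω, 0 ≤ X ω)
    (p : ℕ → ℝ) (hp : ∀ k, 0 ≤ p k)
    (r : ℝ) (hr : 0 < r)
    (hser : ∀ s ∈ Set.Ioo (0:ℝ) r, Summable (fun k => p k * s ^ k) ∧
      (∫ ω, s ^ (X ω) ∂P) = ∑' k, p k * s ^ k)
    (hmgf : ∀ s ∈ Set.Ioc (0:ℝ) 1, Integrable (fun ω => s ^ (X ω)) P) :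
    ∀ᵐ ω ∂P, ∃ n : ℕ, X ω = n := by
  have h₀ : ∀ᵐ x ∂P.map X, 0 ≤ x :=
    (ae_map_iff hXmeas.aemeasurable measurableSet_Ici).2 (ae_of_all _ hXnonneg)
  have hreal : ∀ s ∈ Ioo 0 (min r 1), ∫⁻ x, ENNReal.ofReal s ^ x ∂P.map X
      = ∑' k, ENNReal.ofReal (p k) * ENNReal.ofReal s ^ k := by
    rintro s ⟨hs₀, hs⟩
    obtain ⟨hsum, heq⟩ := hser s ⟨hs₀, hs.trans_le (min_le_left _ _)⟩
    rw [lintegral_map (by fun_prop) hXmeas]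
    simp_rw [ofReal_rpow_of_pos hs₀, ← ofReal_pow hs₀.le, ← ENNReal.ofReal_mul (hp _)]
    rw [← ofReal_integral_eq_lintegral_ofReal
      (hmgf s ⟨hs₀, (hs.trans_le (min_le_right _ _)).le⟩) (ae_of_all _ fun ω => by positivity),
      heq, ENNReal.ofReal_tsum_of_nonneg (fun k => mul_nonneg (hp k) (by positivity)) hsum]
  have h : ∀ᶠ t in 𝓝[>] 0, ∫⁻ x, t ^ x ∂P.map X = ∑' k, ENNReal.ofReal (p k) * t ^ k := by
    filter_upwards [Ioo_mem_nhdsGT (ofReal_pos.2 (lt_min hr one_pos))] with t ⟨ht₀, ht⟩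
    rw [← ofReal_toReal ht.ne_top]
    exact hreal _ ⟨toReal_pos ht₀.ne' ht.ne_top, toReal_lt_of_lt_ofReal ht⟩
  exact ae_of_ae_map hXmeas.aemeasurable (ae_exists_nat_eq_of_lintegral_rpow_eq_tsum _ h₀ _ h)
end

section
/- Let μ be a finite measure on ℝ^k such that α·μ(A) ∈ ℕ₀ for every bounded Borel set A with μ(∂A) = 0. Then μ is a finite sum of point masses of weight 1/α: there exist n ∈ ℕ₀ and points x^1, …, x^n ∈ ℝ^k with μ = (1/α) ∑_{i=1}^n δ_{x^i}. -/
/-!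
Around each point `x` there are arbitrarily small balls `B(x, r)` whose boundary is `μ`-null.
Along such radii `α μ(B(x, r))` is a sequence of naturals converging to `α μ{x}`, so it is
eventually constant: `α μ{x} ∈ ℕ`, and some ball around `x` carries no mass besides `x`.
By second countability `μ` then lives on its atoms; these have mass in `(1/α) ℕ`, so a finite
measure has only finitely many of them, and `μ` is their weighted sum of Dirac masses.
-/

open MeasureTheory Filter Topology Metric ENNReal

theorem Nat.exists_eq_and_eventually_eq_of_tendsto {ι : Type*} {l : Filter ι} [l.NeBot]
    {u : ι → ℕ} {a : ℝ} (h : Tendsto (fun i ↦ (u i : ℝ)) l (𝓝 a)) :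
    ∃ m : ℕ, a = m ∧ ∀ᶠ i in l, u i = m := by
  obtain ⟨m, rfl⟩ : a ∈ Set.range ((↑) : ℕ → ℝ) :=
    Nat.isClosedEmbedding_coe_real.isClosed_range.mem_of_tendsto h
      (Eventually.of_forall fun i ↦ Set.mem_range_self (u i))
  have hu : Tendsto u l (𝓝 m) := Nat.isClosedEmbedding_coe_real.tendsto_nhds_iff.mpr h
  exact ⟨m, rfl, by rwa [nhds_discrete, tendsto_pure] at hu⟩

theorem exists_tendsto_measure_ball_null_frontier {X : Type*} [MetricSpace X]
    [MeasurableSpace X] [OpensMeasurableSpace X] (μ : Measure X) [IsFiniteMeasure μ] (x : X) :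
    ∃ r : ℕ → ℝ, (∀ n, 0 < r n ∧ μ (frontier (ball x (r n))) = 0) ∧
      Tendsto (fun n ↦ μ (ball x (r n))) atTop (𝓝 (μ {x})) := by
  obtain ⟨r, hr_lim, hr⟩ := exists_null_frontiers_thickening μ {x}
  simp only [thickening_singleton] at hr
  have hr_lim' : Tendsto r atTop (𝓝[>] 0) :=
    tendsto_nhdsWithin_of_tendsto_nhds_of_eventually_within r hr_lim
      (Eventually.of_forall fun n ↦ (hr n).1)
  have h := (tendsto_measure_thickening (μ := μ) (s := {x})
    ⟨1, one_pos, measure_ne_top μ _⟩).comp hr_lim'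
  simp only [closure_singleton, Function.comp_def, thickening_singleton] at h
  exact ⟨r, hr, h⟩

theorem exists_measure_ball_eq_singleton_of_nat {X : Type*} [MetricSpace X]
    [MeasurableSpace X] [OpensMeasurableSpace X] (μ : Measure X) [IsFiniteMeasure μ]
    {α : ℝ} (hα : α ≠ 0) (x : X)
    (hnat : ∀ r, 0 < r → μ (frontier (ball x r)) = 0 → ∃ n : ℕ, α * (μ (ball x r)).toReal = n) :
    ∃ m : ℕ, α * (μ {x}).toReal = m ∧ ∃ r > 0, μ (ball x r) = μ {x} := by
  obtain ⟨r, hr, hr_lim⟩ := exists_tendsto_measure_ball_null_frontier μ x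
  choose u hu using fun n ↦ hnat (r n) (hr n).1 (hr n).2
  have hu_lim : Tendsto (fun n ↦ (u n : ℝ)) atTop (𝓝 (α * (μ {x}).toReal)) := by
    simpa only [Function.comp_def, hu] using
      ((ENNReal.tendsto_toReal (measure_ne_top μ _)).comp hr_lim).const_mul α
  obtain ⟨m, hm, hu_eq⟩ := Nat.exists_eq_and_eventually_eq_of_tendsto hu_lim
  obtain ⟨n, hn⟩ := hu_eq.exists
  refine ⟨m, hm, r n, (hr n).1, ?_⟩
  have hball : (μ (ball x (r n))).toReal = (μ {x}).toReal :=
    mul_left_cancel₀ hα (by rw [hu n, hn, hm])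
  exact (ENNReal.toReal_eq_toReal_iff' (measure_ne_top μ _) (measure_ne_top μ _)).mp hball

theorem Finset.exists_fin_sum_eq_sum_nsmul {β M : Type*} [AddCommMonoid M] (T : Finset β)
    (m : β → ℕ) (g : β → M) : ∃ (n : ℕ) (f : Fin n → β), ∑ i, g (f i) = ∑ x ∈ T, m x • g x := by
  classical
  induction T using Finset.induction_on with
  | empty => exact ⟨0, Fin.elim0, by simp⟩
  | insert a T ha ih =>
    obtain ⟨n, f, hf⟩ := ih
    refine ⟨m a + n, Fin.append (fun _ ↦ a) f, ?_⟩
    simp only [Fin.sum_univ_add, Fin.append_left, Fin.append_right, hf, Finset.sum_insert ha,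
      Finset.sum_const, Finset.card_univ, Fintype.card_fin]

namespace MeasureTheory.Measure

variable {X : Type*} [MeasurableSpace X]

theorem eq_sum_smul_dirac_of_measure_compl_eq_zero [MeasurableSingletonClass X] (μ : Measure X)
    (T : Finset X) (hT : μ (↑T)ᶜ = 0) : μ = ∑ x ∈ T, μ {x} • dirac x := by
  calc μ = μ.restrict (⋃ x ∈ T, {x}) := by
        rw [← Finset.set_biUnion_coe, Set.biUnion_of_singleton]
        exact (restrict_eq_self_of_ae_mem (mem_ae_iff.mpr hT)).symm
    _ = ∑ x ∈ T, μ {x} • dirac x := by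
        rw [restrict_biUnion_finset (fun x _ y _ hxy ↦ Set.disjoint_singleton.mpr hxy)
          measurableSet_singleton, sum_fintype, ← Finset.sum_coe_sort T]
        simp only [restrict_singleton]

theorem finite_setOf_le_measure_singleton [MeasurableSingletonClass X] (μ : Measure X)
    [IsFiniteMeasure μ] {c : ℝ≥0∞} (hc : c ≠ 0) : {x | c ≤ μ {x}}.Finite :=
  finite_const_le_meas_of_disjoint_iUnion μ (pos_iff_ne_zero.mpr hc)
    (fun _ ↦ measurableSet_singleton _)
    (fun _ _ hxy ↦ Set.disjoint_singleton.mpr hxy) (measure_ne_top μ _)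

theorem measure_setOf_measure_singleton_eq_zero [TopologicalSpace X] [SecondCountableTopology X]
    (μ : Measure X) (hloc : ∀ x, ∃ U ∈ 𝓝 x, μ U = μ {x}) : μ {x | μ {x} = 0} = 0 := by
  refine measure_null_of_locally_null _ fun x hx ↦ ?_
  obtain ⟨U, hU, hμU⟩ := hloc x
  exact ⟨U, nhdsWithin_le_nhds hU, hμU.trans hx⟩

theorem exists_eq_smul_sum_dirac [TopologicalSpace X] [SecondCountableTopology X]
    [MeasurableSingletonClass X] (μ : Measure X) [IsFiniteMeasure μ] {c : ℝ≥0∞} (hc : c ≠ 0)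
    (m : X → ℕ) (hm : ∀ x, μ {x} = m x * c) (hloc : ∀ x, ∃ U ∈ 𝓝 x, μ U = μ {x}) :
    ∃ (n : ℕ) (x : Fin n → X), μ = c • ∑ i, dirac (x i) := by
  set T := (finite_setOf_le_measure_singleton μ hc).toFinset
  have hT : μ (↑T)ᶜ = 0 := by
    refine measure_mono_null (fun x hx ↦ ?_) (measure_setOf_measure_singleton_eq_zero μ hloc)
    have hlt : μ {x} < c := by simpa [T] using hx
    rw [hm] at hlt
    have hmx : m x = 0 := by
      by_contra h
      exact hlt.not_ge (le_mul_of_one_le_left' (mod_cast Nat.one_le_iff_ne_zero.mpr h))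
    simp [hm, hmx]
  obtain ⟨n, f, hf⟩ := Finset.exists_fin_sum_eq_sum_nsmul T m dirac
  refine ⟨n, f, ?_⟩
  rw [hf, Finset.smul_sum, eq_sum_smul_dirac_of_measure_compl_eq_zero μ T hT]
  refine Finset.sum_congr rfl fun x _ ↦ ?_
  rw [hm, mul_comm, ← smul_smul, Nat.cast_smul_eq_nsmul]

end MeasureTheory.Measure

/-- A finite measure `μ` on `ℝ^k` such that `α·μ(A) ∈ ℕ₀` for every bounded Borel
continuity set `A` is a finite sum of point masses of weight `1/α`. -/
theorem stmt_9
    {k : ℕ} (μ : Measure (Fin k → ℝ)) [IsFiniteMeasure μ]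
    (α : ℝ) (hα : 0 < α)
    (hnat : ∀ A : Set (Fin k → ℝ), Bornology.IsBounded A → MeasurableSet A →
      μ (frontier A) = 0 → ∃ n : ℕ, α * (μ A).toReal = n) :
    ∃ (n : ℕ) (x : Fin n → (Fin k → ℝ)),
      μ = ENNReal.ofReal (1/α) • ∑ i, Measure.dirac (x i) := by
  choose m hm r hr hμr using fun x ↦ exists_measure_ball_eq_singleton_of_nat μ hα.ne' x
    fun r _ ↦ hnat (ball x r) isBounded_ball measurableSet_ball
  have hatom : ∀ x, μ {x} = m x * ENNReal.ofReal (1 / α) := fun x ↦ by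
    rw [← ENNReal.ofReal_toReal (measure_ne_top μ {x}), ← ENNReal.ofReal_natCast,
      ← ENNReal.ofReal_mul (Nat.cast_nonneg _), ← hm x]
    field_simp
  exact Measure.exists_eq_smul_sum_dirac μ (ENNReal.ofReal_pos.mpr (by positivity)).ne' m hatom
    fun x ↦ ⟨ball x (r x), ball_mem_nhds x (hr x), hμr x⟩
end
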